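/- arXiv:1403.2092 — 2 statements merged into one kernel-verified Lean document; each statement's English description precedes it below -/
import Mathlib

section
/- If A, B, C, D are iid discrete random variables taking values in a finite set Ω, then Pr{A = B ∧ C = D} ≤ Pr{A = B = C}. -/
/-! Write `p` for the common law. By independence, `P(A = B ∧ C = D) = P(A = B) P(C = D)`
and `P(A = B) = ∑ p(x)²`, `P(A = B = C) = ∑ p(x)³`. Cauchy–Schwarz for the vectors `(√p(x))`
and `(p(x)^{3/2})` gives `(∑ p(x)²)² ≤ (∑ p(x)) (∑ p(x)³) = ∑ p(x)³`. -/

open MeasureTheory ProbabilityTheory Finset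
open scoped ENNReal NNReal

lemma NNReal.sq_sum_sq_le_sum_mul_sum_pow_three {ι : Type*} (s : Finset ι) (p : ι → ℝ≥0) :
    (∑ i ∈ s, p i ^ 2) ^ 2 ≤ (∑ i ∈ s, p i) * ∑ i ∈ s, p i ^ 3 :=
  sum_sq_le_sum_mul_sum_of_sq_le_mul s (fun _ _ => zero_le) (fun _ _ => zero_le)
    fun _ _ => le_of_eq (by ring)

lemma ENNReal.sq_sum_sq_le_sum_mul_sum_pow_three {ι : Type*} (s : Finset ι) (p : ι → ℝ≥0∞) :
    (∑ i ∈ s, p i ^ 2) ^ 2 ≤ (∑ i ∈ s, p i) * ∑ i ∈ s, p i ^ 3 := by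
  by_cases hfin : ∀ i ∈ s, p i ≠ ∞
  · have hp : ∀ i ∈ s, p i = (p i).toNNReal := fun i hi => (ENNReal.coe_toNNReal (hfin i hi)).symm
    rw [sum_congr rfl hp, sum_congr rfl fun i hi => congrArg (· ^ 2) (hp i hi),
      sum_congr rfl fun i hi => congrArg (· ^ 3) (hp i hi)]
    exact_mod_cast NNReal.sq_sum_sq_le_sum_mul_sum_pow_three s _
  · push Not at hfin
    obtain ⟨i, hi, hpi⟩ := hfin
    have h₁ : ∑ j ∈ s, p j = ∞ := ENNReal.sum_eq_top.2 ⟨i, hi, hpi⟩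
    have h₃ : ∑ j ∈ s, p j ^ 3 = ∞ := ENNReal.sum_eq_top.2 ⟨i, hi, by simp [hpi]⟩
    simp [h₁, h₃]

namespace ProbabilityTheory

variable {Ω' Ω ι : Type*} [MeasurableSpace Ω'] {μ : Measure Ω'}
  [Fintype Ω] [MeasurableSpace Ω] [MeasurableSingletonClass Ω]

lemma measure_eq_sum_measure_preimage_singleton_inter {f : Ω' → Ω} (hf : Measurable f)
    (E : Set Ω') : μ E = ∑ a, μ (f ⁻¹' {a} ∩ E) := by
  have h := sum_measure_preimage_singleton (μ := μ.restrict E) Finset.univ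
    fun a _ => hf (measurableSet_singleton a)
  simpa [Measure.restrict_apply (hf (measurableSet_singleton _))] using h.symm

lemma iIndepFun.measure_forall_eq_eq_sum_prod {X : ι → Ω' → Ω} (hX : iIndepFun X μ) {i : ι}
    (hXi : Measurable (X i)) {s : Finset ι} (hi : i ∈ s) :
    μ {ω | ∀ j ∈ s, X i ω = X j ω} = ∑ a, ∏ j ∈ s, μ (X j ⁻¹' {a}) := by
  rw [measure_eq_sum_measure_preimage_singleton_inter hXi]
  refine sum_congr rfl fun a _ => ?_
  have hfiber : X i ⁻¹' {a} ∩ {ω | ∀ j ∈ s, X i ω = X j ω} = ⋂ j ∈ s, X j ⁻¹' {a} := by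
    ext ω
    simp only [Set.mem_inter_iff, Set.mem_preimage, Set.mem_singleton_iff, Set.mem_ofPred_eq,
      Set.mem_iInter]
    exact ⟨fun ⟨hωi, hω⟩ j hj => (hω j hj).symm.trans hωi, fun hω => ⟨hω i hi, fun j hj =>
      (hω i hi).trans (hω j hj).symm⟩⟩
  rw [hfiber, hX.meas_biInter fun j _ => ⟨{a}, measurableSet_singleton a, rfl⟩]

lemma iIndepFun.measure_forall_eq_eq_sum_pow {X : ι → Ω' → Ω} (hX : iIndepFun X μ) {i : ι}
    (hXi : Measurable (X i)) {Y : Ω' → Ω} (hident : ∀ j, IdentDistrib (X j) Y μ μ)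
    {s : Finset ι} (hi : i ∈ s) :
    μ {ω | ∀ j ∈ s, X i ω = X j ω} = ∑ a, μ (Y ⁻¹' {a}) ^ s.card := by
  rw [hX.measure_forall_eq_eq_sum_prod hXi hi]
  refine sum_congr rfl fun a _ => ?_
  rw [prod_congr rfl fun j _ => (hident j).measure_mem_eq (measurableSet_singleton a), prod_const]

lemma iIndepFun.measure_eq_eq_sum_sq {X : ι → Ω' → Ω} (hX : iIndepFun X μ) {i j : ι}
    (hij : i ≠ j) (hXi : Measurable (X i)) {Y : Ω' → Ω}
    (hident : ∀ k, IdentDistrib (X k) Y μ μ) :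
    μ {ω | X i ω = X j ω} = ∑ a, μ (Y ⁻¹' {a}) ^ 2 := by
  classical
  rw [← card_pair hij, ← hX.measure_forall_eq_eq_sum_pow hXi hident (mem_insert_self i {j})]
  congr 1
  ext ω
  simp

lemma iIndepFun.measure_eq_eq_and_eq_eq_sum_pow_three {X : ι → Ω' → Ω} (hX : iIndepFun X μ)
    {i j k : ι} (hij : i ≠ j) (hik : i ≠ k) (hjk : j ≠ k) (hXi : Measurable (X i))
    {Y : Ω' → Ω} (hident : ∀ l, IdentDistrib (X l) Y μ μ) :
    μ {ω | X i ω = X j ω ∧ X j ω = X k ω} = ∑ a, μ (Y ⁻¹' {a}) ^ 3 := by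
  classical
  rw [← card_eq_three.2 ⟨i, j, k, hij, hik, hjk, rfl⟩,
    ← hX.measure_forall_eq_eq_sum_pow hXi hident (mem_insert_self i {j, k})]
  congr 1
  ext ω
  simp only [mem_insert, mem_singleton, forall_eq_or_imp, forall_eq, Set.mem_ofPred_eq]
  grind

end ProbabilityTheory

theorem triple_vs_two_doubles {Ω' : Type*} [MeasurableSpace Ω']
    (μ : Measure Ω') [IsProbabilityMeasure μ]
    {Ω : Type*} [Fintype Ω] [MeasurableSpace Ω] [MeasurableSingletonClass Ω]
    (X : Fin 4 → Ω' → Ω) (hmeas : ∀ i, Measurable (X i))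
    (hindep : iIndepFun X μ)
    (hident : ∀ i j, IdentDistrib (X i) (X j) μ μ) :
    μ {ω | X 0 ω = X 1 ω ∧ X 2 ω = X 3 ω} ≤
      μ {ω | X 0 ω = X 1 ω ∧ X 1 ω = X 2 ω} := by
  have h_total : ∑ a, μ (X 0 ⁻¹' {a}) = 1 := by
    simpa using (measure_eq_sum_measure_preimage_singleton_inter (μ := μ) (hmeas 0) .univ).symm
  have h_doubles : μ {ω | X 0 ω = X 1 ω ∧ X 2 ω = X 3 ω} =
      μ {ω | X 0 ω = X 1 ω} * μ {ω | X 2 ω = X 3 ω} :=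
    (hindep.indepFun_prodMk_prodMk hmeas 0 1 2 3 (by decide) (by decide) (by decide)
      (by decide)).measure_inter_preimage_eq_mul _ _ measurableSet_diagonal measurableSet_diagonal
  calc μ {ω | X 0 ω = X 1 ω ∧ X 2 ω = X 3 ω} = (∑ a, μ (X 0 ⁻¹' {a}) ^ 2) ^ 2 := by
        rw [h_doubles, hindep.measure_eq_eq_sum_sq (by decide) (hmeas 0) (hident · 0),
          hindep.measure_eq_eq_sum_sq (by decide) (hmeas 2) (hident · 0), sq]
    _ ≤ (∑ a, μ (X 0 ⁻¹' {a})) * ∑ a, μ (X 0 ⁻¹' {a}) ^ 3 :=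
        ENNReal.sq_sum_sq_le_sum_mul_sum_pow_three _ _
    _ = μ {ω | X 0 ω = X 1 ω ∧ X 1 ω = X 2 ω} := by
        rw [h_total, one_mul, hindep.measure_eq_eq_and_eq_eq_sum_pow_three (by decide) (by decide)
          (by decide) (hmeas 0) (hident · 0)]
end

section
/- The function d(p) = −4p^4 + 8p^3 − 5p^2 + p attains its maximum value 1/16 on [0,1] exactly at p = 1/2 + 1/(2√2) and p = 1/2 − 1/(2√2). -/
/-! Completing the square: `1/16 - d p = (2 p² - 2 p + 1/4)²`, so `d p ≤ 1/16`, with equality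
exactly at the roots `1/2 ± √2/4` of the quadratic `2 p² - 2 p + 1/4`. -/

open Real

lemma one_div_sixteen_sub_eq_sq (p : ℝ) :
    1 / 16 - (-4 * p ^ 4 + 8 * p ^ 3 - 5 * p ^ 2 + p) = (2 * p ^ 2 - 2 * p + 1 / 4) ^ 2 := by
  ring

lemma one_div_two_mul_sqrt_two : 1 / (2 * √2) = √2 / 4 := by
  have hs : √2 * √2 = 2 := mul_self_sqrt zero_le_two
  field_simp
  linarith

lemma quadratic_eq_zero_iff_eq_half_add_or_sub (p : ℝ) :
    2 * p ^ 2 - 2 * p + 1 / 4 = 0 ↔ p = 1 / 2 + √2 / 4 ∨ p = 1 / 2 - √2 / 4 := by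
  have hdiscrim : discrim (2 : ℝ) (-2) (1 / 4) = √2 * √2 := by
    rw [discrim, mul_self_sqrt zero_le_two]
    norm_num
  have hplus : (-(-2) + √2) / (2 * 2) = 1 / 2 + √2 / 4 := by ring
  have hminus : (-(-2) - √2) / (2 * 2) = 1 / 2 - √2 / 4 := by ring
  rw [← hplus, ← hminus, ← quadratic_eq_zero_iff two_ne_zero hdiscrim]
  ring_nf

theorem advantage_max_general (p : ℝ) :
    -4 * p ^ 4 + 8 * p ^ 3 - 5 * p ^ 2 + p ≤ 1 / 16 ∧
      (-4 * p ^ 4 + 8 * p ^ 3 - 5 * p ^ 2 + p = 1 / 16 ↔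
        p = 1 / 2 + 1 / (2 * Real.sqrt 2) ∨ p = 1 / 2 - 1 / (2 * Real.sqrt 2)) := by
  have hsq := one_div_sixteen_sub_eq_sq p
  refine ⟨sub_nonneg.mp (hsq ▸ sq_nonneg _), ?_⟩
  rw [one_div_two_mul_sqrt_two, ← quadratic_eq_zero_iff_eq_half_add_or_sub,
    ← pow_eq_zero_iff two_ne_zero, ← hsq, sub_eq_zero, eq_comm]

theorem advantage_max (p : ℝ) (hp : p ∈ Set.Icc (0 : ℝ) 1) :
    -4 * p ^ 4 + 8 * p ^ 3 - 5 * p ^ 2 + p ≤ 1 / 16 ∧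
      (-4 * p ^ 4 + 8 * p ^ 3 - 5 * p ^ 2 + p = 1 / 16 ↔
        p = 1 / 2 + 1 / (2 * Real.sqrt 2) ∨ p = 1 / 2 - 1 / (2 * Real.sqrt 2)) :=
  advantage_max_general p
end
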